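/- arXiv:1607.04681 — 2 statements merged into one kernel-verified Lean document; each statement's English description precedes it below -/
import Mathlib

section
/- Let L : H¹ → R be a group linear map which is not identically zero, let a ∈ H¹, and let H : R → R be a function which is not subdifferentiable at L(a). Then the composition H ∘ L : H¹ → R is not Pansu subdifferentiable at a. -/
open Filter Topology MeasureTheory
open scoped NNReal ENNReal

noncomputable section

/-- The underlying space of the first Heisenberg group: `ℝ³`. -/
abbrev Heis : Type := ℝ × ℝ × ℝ

/-- Heisenberg group multiplication:
`(x,y,t)·(x',y',t') = (x+x', y+y', t+t' − 2(xy' − yx'))`. -/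
def hmul (p q : Heis) : Heis :=
  (p.1 + q.1, p.2.1 + q.2.1, p.2.2 + q.2.2 - 2 * (p.1 * q.2.1 - p.2.1 * q.1))

/-- Heisenberg group inverse: `(x,y,t)⁻¹ = (−x,−y,−t)`. -/
def hinv (p : Heis) : Heis := (-p.1, -p.2.1, -p.2.2)

/-- Koranyi norm: `‖(x,y,t)‖ = ((x²+y²)² + t²)^(1/4)`. -/
def knorm (p : Heis) : ℝ := ((p.1 ^ 2 + p.2.1 ^ 2) ^ 2 + p.2.2 ^ 2) ^ ((1 : ℝ) / 4)

/-- Koranyi distance: `d_k(a,b) = ‖a⁻¹·b‖_k`. -/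
def dk (p q : Heis) : ℝ := knorm (hmul (hinv p) q)

/-- Euclidean distance on `ℝ³`. -/
def de (p q : Heis) : ℝ :=
  Real.sqrt ((p.1 - q.1) ^ 2 + (p.2.1 - q.2.1) ^ 2 + (p.2.2 - q.2.2) ^ 2)

/-- Dilation `δ_r(x,y,t) = (rx, ry, r²t)`. -/
def hdil (r : ℝ) (p : Heis) : Heis := (r * p.1, r * p.2.1, r ^ 2 * p.2.2)

/-- Open ball with respect to a distance function `d`. -/
def ballD {M : Type*} (d : M → M → ℝ) (x : M) (r : ℝ) : Set M := {y | d x y < r}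

/-- `E` is `lam`-porous at `a` with respect to the distance function `d`: there are points
`x n` converging to `a` such that `B(x n, lam * d(x n, a))` misses `E`. -/
def PorousAtD {M : Type*} (d : M → M → ℝ) (lam : ℝ) (E : Set M) (a : M) : Prop :=
  ∃ x : ℕ → M, Tendsto (fun n => d (x n) a) atTop (𝓝 0) ∧
    ∀ n, ballD d (x n) (lam * d (x n) a) ∩ E = ∅

/-- `E` is porous w.r.t. `d`: a single `lam ∈ (0,1)` works at every point of `E`. -/
def PorousD {M : Type*} (d : M → M → ℝ) (E : Set M) : Prop :=
  ∃ lam : ℝ, 0 < lam ∧ lam < 1 ∧ ∀ a ∈ E, PorousAtD d lam E a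

/-- `E` is σ-porous w.r.t. `d`: a countable union of porous sets. -/
def SigmaPorousD {M : Type*} (d : M → M → ℝ) (E : Set M) : Prop :=
  ∃ f : ℕ → Set M, (∀ n, PorousD d (f n)) ∧ E = ⋃ n, f n

/-- The translated dilated Cantor set `A_{n,k} = 2⁻ⁿ + k·2⁻²ⁿ + 2⁻²ⁿ·C`. -/
def Acantor (n k : ℕ) : Set ℝ :=
  (fun c => (2:ℝ) ^ (-(n:ℤ)) + (k : ℝ) * (2:ℝ) ^ (-(2*n:ℤ)) + (2:ℝ) ^ (-(2*n:ℤ)) * c) ''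
    cantorSet

/-- `|(x,y)|` for `p = (x,y,t)`. -/
def normxy (p : Heis) : ℝ := Real.sqrt (p.1 ^ 2 + p.2.1 ^ 2)

/-- `{0} ∪ ⋃_{n≥1} ⋃_{0 ≤ k ≤ 2ⁿ−1} {p : |(x,y)| ∈ A_{n,k}}`. -/
def cantorUnion : Set Heis :=
  {(0 : Heis)} ∪
    ⋃ (n : ℕ) (_ : 1 ≤ n) (k : ℕ) (_ : k < 2 ^ n), {p : Heis | normxy p ∈ Acantor n k}

/-- The cone `Λ = {(x,y,t) : |t| ≤ |(x,y)|}`. -/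
def LambdaCone : Set Heis := {p : Heis | |p.2.2| ≤ normxy p}

/-- The set `P_e = Λ ∩ ({0} ∪ ⋃ A_{n,k}-cylinders)`. -/
def Pe : Set Heis := LambdaCone ∩ cantorUnion

/-- The cusp `Υ = {(x,y,t) : |t| ≥ 2|(x,y)|²}`. -/
def UpsilonCusp : Set Heis := {p : Heis | 2 * normxy p ^ 2 ≤ |p.2.2|}

/-- The set `P_c = Υ ∩ ({0} ∪ ⋃ A_{n,k}-cylinders)`. -/
def Pc : Set Heis := UpsilonCusp ∩ cantorUnion

/-- `L : H¹ → ℝ` is group linear: additive on the group and homogeneous for dilations. -/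
def GroupLinear (L : Heis → ℝ) : Prop :=
  (∀ p q, L (hmul p q) = L p + L q) ∧ ∀ r : ℝ, 0 < r → ∀ p, L (hdil r p) = r * L p

/-- Pansu differentiability of `f : H¹ → ℝ` at `x₀`. -/
def PansuDiffAt (f : Heis → ℝ) (x₀ : Heis) : Prop :=
  ∃ L : Heis → ℝ, GroupLinear L ∧
    Tendsto (fun h => (f (hmul x₀ h) - f x₀ - L h) / dk h 0) (𝓝[≠] (0 : Heis)) (𝓝 0)

/-- Pansu subdifferentiability of `f : H¹ → ℝ` at `x₀`:
`liminf_{h→0} (f(x₀h) − f(x₀) − L(h))/d_k(h) ≥ 0` for some group linear `L`. -/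
def PansuSubdiffAt (f : Heis → ℝ) (x₀ : Heis) : Prop :=
  ∃ L : Heis → ℝ, GroupLinear L ∧ ∀ ε : ℝ, 0 < ε →
    ∀ᶠ h in 𝓝[≠] (0 : Heis), -ε < (f (hmul x₀ h) - f x₀ - L h) / dk h 0

/-- Subdifferentiability of `F : ℝ → ℝ` at `a`:
`liminf_{t→0} (F(a+t) − F(a) − ℓt)/|t| ≥ 0` for some `ℓ ∈ ℝ`. -/
def RSubdiffAt (F : ℝ → ℝ) (a : ℝ) : Prop :=
  ∃ l : ℝ, ∀ ε : ℝ, 0 < ε →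
    ∀ᶠ t in 𝓝[≠] (0 : ℝ), -ε < (F (a + t) - F a - l * t) / |t|

/-- `f` is Lipschitz with respect to the Koranyi distance. -/
def DkLipschitz (f : Heis → ℝ) : Prop :=
  ∃ K : ℝ, 0 ≤ K ∧ ∀ p q, |f p - f q| ≤ K * dk p q

/-- The first horizontal derivative `X₁f(p)` has value `d`. -/
def HDeriv1 (f : Heis → ℝ) (p : Heis) (d : ℝ) : Prop :=
  Tendsto (fun s : ℝ => (f (hmul p (s, 0, 0)) - f p) / s) (𝓝[≠] (0 : ℝ)) (𝓝 d)

/-- The second horizontal derivative `X₂f(p)` has value `d`. -/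
def HDeriv2 (f : Heis → ℝ) (p : Heis) (d : ℝ) : Prop :=
  Tendsto (fun s : ℝ => (f (hmul p (0, s, 0)) - f p) / s) (𝓝[≠] (0 : ℝ)) (𝓝 d)

/-! A group linear map vanishes on the centre and is linear along horizontal lines through the
identity. Choosing a horizontal direction `w` with `L w = 1`, the line `t ↦ a · (t w)` is mapped by
`L` to `L a + t` and has Koranyi length `|t| |w|`, so a Pansu subgradient of `H ∘ L` at `a`
restricted to this line is a subgradient of `H` at `L a`. -/

@[simp]
theorem hmul_zero_right (p : Heis) : hmul p (0, 0, 0) = p := by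
  ext <;> simp [hmul]

theorem GroupLinear.map_zero {L : Heis → ℝ} (hL : GroupLinear L) : L 0 = 0 := by
  have h := hL.1 0 0
  rw [show hmul 0 0 = 0 by ext <;> simp [hmul]] at h
  linarith

theorem GroupLinear.map_hinv {L : Heis → ℝ} (hL : GroupLinear L) (p : Heis) :
    L (hinv p) = -L p := by
  have h := hL.1 p (hinv p)
  rw [show hmul p (hinv p) = 0 by ext <;> simp [hmul, hinv]; ring, hL.map_zero] at h
  linarith

theorem GroupLinear.map_vertical {L : Heis → ℝ} (hL : GroupLinear L) (t : ℝ) :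
    L (0, 0, t) = 0 := by
  have hcomm : ((0, 0, t) : Heis) =
      hmul (hmul (hmul (1, 0, 0) (0, -t / 4, 0)) (hinv (1, 0, 0))) (hinv (0, -t / 4, 0)) := by
    ext <;> simp [hmul, hinv]; ring
  rw [hcomm, hL.1, hL.1, hL.1, hL.map_hinv, hL.map_hinv]
  ring

theorem GroupLinear.map_eq_horizontal {L : Heis → ℝ} (hL : GroupLinear L) (x y t : ℝ) :
    L (x, y, t) = L (x, y, 0) := by
  have h : ((x, y, t) : Heis) = hmul (x, y, 0) (0, 0, t) := by ext <;> simp [hmul]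
  rw [h, hL.1, hL.map_vertical, add_zero]

theorem GroupLinear.map_horizontal_smul {L : Heis → ℝ} (hL : GroupLinear L) (w₁ w₂ t : ℝ) :
    L (t * w₁, t * w₂, 0) = t * L (w₁, w₂, 0) := by
  rcases lt_trichotomy t 0 with ht | rfl | ht
  · have h := hL.2 (-t) (neg_pos.mpr ht) (w₁, w₂, 0)
    rw [show hdil (-t) (w₁, w₂, 0) = hinv (t * w₁, t * w₂, 0) by ext <;> simp [hdil, hinv],
      hL.map_hinv] at h
    linarith
  · simp only [zero_mul]
    exact hL.map_zero
  · simpa [hdil] using hL.2 t ht (w₁, w₂, 0)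

theorem GroupLinear.exists_map_horizontal_eq_one {L : Heis → ℝ} (hL : GroupLinear L)
    (hL0 : ∃ p, L p ≠ 0) : ∃ w₁ w₂ : ℝ, L (w₁, w₂, 0) = 1 := by
  obtain ⟨⟨x, y, t⟩, hp⟩ := hL0
  rw [hL.map_eq_horizontal] at hp
  refine ⟨x / L (x, y, 0), y / L (x, y, 0), ?_⟩
  rw [div_eq_inv_mul, div_eq_inv_mul, hL.map_horizontal_smul, inv_mul_cancel₀ hp]

theorem dk_horizontal_line_zero (w₁ w₂ t : ℝ) :
    dk (t * w₁, t * w₂, 0) 0 = |t| * √(w₁ ^ 2 + w₂ ^ 2) := by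
  have h : dk (t * w₁, t * w₂, 0) 0 = ((t ^ 2 * (w₁ ^ 2 + w₂ ^ 2)) ^ 2) ^ ((1 : ℝ) / 4) := by
    simp [dk, knorm, hmul, hinv]
    ring_nf
  rw [h, ← Real.rpow_natCast, ← Real.rpow_mul (by positivity)]
  norm_num
  rw [← Real.sqrt_eq_rpow, Real.sqrt_mul (sq_nonneg t), Real.sqrt_sq_eq_abs]

theorem tendsto_horizontal_line_nhdsNE {w₁ w₂ : ℝ} (hw : (w₁, w₂) ≠ 0) :
    Tendsto (fun t : ℝ => ((t * w₁, t * w₂, 0) : Heis)) (𝓝[≠] 0) (𝓝[≠] 0) := by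
  refine tendsto_nhdsWithin_of_tendsto_nhds_of_eventually_within _ ?_ ?_
  · have : Continuous (fun t : ℝ => ((t * w₁, t * w₂, 0) : Heis)) := by fun_prop
    simpa [Prod.mk_zero_zero] using (this.tendsto 0).mono_left nhdsWithin_le_nhds
  · filter_upwards [self_mem_nhdsWithin] with t ht
    simp only [Set.mem_compl_iff, Set.mem_singleton_iff, Prod.mk_eq_zero, mul_eq_zero] at ht ⊢
    rw [Ne, Prod.mk_eq_zero] at hw
    tauto

theorem PansuSubdiffAt.rSubdiffAt_horizontal {f : Heis → ℝ} {a : Heis} (hf : PansuSubdiffAt f a)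
    {w₁ w₂ : ℝ} (hw : (w₁, w₂) ≠ 0) :
    RSubdiffAt (fun t => f (hmul a (t * w₁, t * w₂, 0))) 0 := by
  obtain ⟨Λ, hΛ, hsub⟩ := hf
  set c := √(w₁ ^ 2 + w₂ ^ 2)
  have hc : 0 < c := Real.sqrt_pos.mpr <| by
    rcases ne_or_eq w₁ 0 with h | rfl
    · positivity
    · have : w₂ ≠ 0 := by rintro rfl; exact hw rfl
      positivity
  refine ⟨Λ (w₁, w₂, 0), fun ε hε => ?_⟩
  filter_upwards [(tendsto_horizontal_line_nhdsNE hw).eventually (hsub (ε / c) (div_pos hε hc)),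
    self_mem_nhdsWithin] with t ht ht0
  rw [hΛ.map_horizontal_smul, dk_horizontal_line_zero] at ht
  have habs : 0 < |t| := abs_pos.mpr ht0
  simp only [zero_add, zero_mul, hmul_zero_right]
  rw [lt_div_iff₀ habs]
  rw [lt_div_iff₀ (mul_pos habs hc)] at ht
  have hscale : -(ε / c) * (|t| * c) = -ε * |t| := by field_simp
  linarith

/-- If `L` is a non-zero group linear map and `H` is not subdifferentiable at `L(a)`,
then `H ∘ L` is not Pansu subdifferentiable at `a`. -/
theorem stmt_12 (L : Heis → ℝ) (hL : GroupLinear L) (hL0 : ∃ p, L p ≠ 0)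
    (a : Heis) (Hf : ℝ → ℝ) (hHf : ¬ RSubdiffAt Hf (L a)) :
    ¬ PansuSubdiffAt (fun p => Hf (L p)) a := by
  intro hsub
  obtain ⟨w₁, w₂, hw⟩ := hL.exists_map_horizontal_eq_one hL0
  have hw0 : (w₁, w₂) ≠ 0 := by
    rintro h
    obtain ⟨rfl, rfl⟩ := Prod.mk_eq_zero.mp h
    exact one_ne_zero (hw.symm.trans hL.map_zero)
  have hline := hsub.rSubdiffAt_horizontal hw0
  have hcomp : ∀ t, Hf (L (hmul a (t * w₁, t * w₂, 0))) = Hf (L a + t) := fun t => by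
    rw [hL.1, hL.map_horizontal_smul, hw, mul_one]
  apply hHf
  simpa [RSubdiffAt, hcomp] using hline
end
end

section
/- There exists a function b : H¹ → R which is 1-Lipschitz with respect to the Koranyi distance d_k, is Pansu differentiable at every point of H¹, is nonnegative, has compact support, and is not identically zero. -/
open Filter Topology MeasureTheory
open scoped NNReal ENNReal

noncomputable section

/-! A smooth bump function on `ℝ³`, divided by a suitable constant, works.

If `f` is Euclidean-differentiable at `x₀` with differential `D`, the horizontal part
`h ↦ D (h₁, h₂, 0)` is group linear and is a Pansu differential of `f` at `x₀`: near `0` the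
Euclidean norm of `h` is at most `d_k(h)`, while the vertical term `h₃ · D (0, 0, 1)` is
`O(d_k(h)²)`.

For the Lipschitz bound, the coordinates of `p⁻¹q` control `q - p`:
`|Δx|, |Δy| ≤ d_k(p, q)` and `|Δt| ≤ d_k(p, q)² + 2 (|p_x| + |p_y|) d_k(p, q)`. So on a
bounded set, at scales `d_k ≤ 1`, a Euclidean-Lipschitz function is `d_k`-Lipschitz; at larger
scales boundedness suffices. -/

open Asymptotics

lemma knorm_nonneg (h : Heis) : 0 ≤ knorm h := by
  unfold knorm; positivity

lemma knorm_pow_four (h : Heis) : knorm h ^ 4 = (h.1 ^ 2 + h.2.1 ^ 2) ^ 2 + h.2.2 ^ 2 := by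
  rw [knorm, one_div, show (4 : ℝ) = (4 : ℕ) by norm_num]
  exact Real.rpow_inv_natCast_pow (by positivity) (by norm_num)

lemma abs_fst_le_knorm (h : Heis) : |h.1| ≤ knorm h := by
  rw [← pow_le_pow_iff_left₀ (abs_nonneg _) (knorm_nonneg h) (by norm_num : 4 ≠ 0),
    knorm_pow_four, show |h.1| ^ 4 = (h.1 ^ 2) ^ 2 by rw [← sq_abs h.1]; ring]
  nlinarith [sq_nonneg h.2.1, sq_nonneg h.1, sq_nonneg h.2.2]

lemma abs_snd_fst_le_knorm (h : Heis) : |h.2.1| ≤ knorm h := by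
  rw [← pow_le_pow_iff_left₀ (abs_nonneg _) (knorm_nonneg h) (by norm_num : 4 ≠ 0),
    knorm_pow_four, show |h.2.1| ^ 4 = (h.2.1 ^ 2) ^ 2 by rw [← sq_abs h.2.1]; ring]
  nlinarith [sq_nonneg h.2.1, sq_nonneg h.1, sq_nonneg h.2.2]

lemma abs_snd_snd_le_knorm_sq (h : Heis) : |h.2.2| ≤ knorm h ^ 2 := by
  refine abs_le_of_sq_le_sq ?_ (by positivity)
  rw [← pow_mul, knorm_pow_four]
  nlinarith [sq_nonneg (h.1 ^ 2 + h.2.1 ^ 2)]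

lemma norm_le_knorm {h : Heis} (hh : knorm h ≤ 1) : ‖h‖ ≤ knorm h := by
  have hsq : knorm h ^ 2 ≤ knorm h := by nlinarith [knorm_nonneg h]
  simp only [Prod.norm_def, Real.norm_eq_abs, max_le_iff]
  exact ⟨abs_fst_le_knorm h, abs_snd_fst_le_knorm h, (abs_snd_snd_le_knorm_sq h).trans hsq⟩

lemma continuous_knorm : Continuous knorm := by
  unfold knorm; fun_prop (disch := norm_num)

lemma knorm_zero : knorm 0 = 0 := by
  simp [knorm]

lemma knorm_hinv (h : Heis) : knorm (hinv h) = knorm h := by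
  simp [knorm, hinv]

lemma hmul_zero (p : Heis) : hmul p 0 = p := by
  simp [hmul]

lemma hinv_hmul_hinv (p q : Heis) : hinv (hmul (hinv p) q) = hmul (hinv q) p := by
  simp only [hinv, hmul, Prod.mk.injEq]; refine ⟨?_, ?_, ?_⟩ <;> ring

lemma dk_comm (p q : Heis) : dk p q = dk q p := by
  rw [dk, dk, ← hinv_hmul_hinv, knorm_hinv]

lemma dk_zero_right (h : Heis) : dk h 0 = knorm h := by
  rw [dk, ← knorm_hinv]; congr 1; simp [hmul, hinv]

lemma dk_nonneg (p q : Heis) : 0 ≤ dk p q := knorm_nonneg _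

lemma abs_sub_fst_le_dk (p q : Heis) : |q.1 - p.1| ≤ dk p q := by
  have := abs_fst_le_knorm (hmul (hinv p) q)
  rwa [show (hmul (hinv p) q).1 = q.1 - p.1 by simp [hmul, hinv]; ring] at this

lemma abs_sub_snd_fst_le_dk (p q : Heis) : |q.2.1 - p.2.1| ≤ dk p q := by
  have := abs_snd_fst_le_knorm (hmul (hinv p) q)
  rwa [show (hmul (hinv p) q).2.1 = q.2.1 - p.2.1 by simp [hmul, hinv]; ring] at this

lemma abs_sub_snd_snd_le_dk (p q : Heis) :
    |q.2.2 - p.2.2| ≤ dk p q ^ 2 + 2 * (|p.1| + |p.2.1|) * dk p q := by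
  have ht := abs_snd_snd_le_knorm_sq (hmul (hinv p) q)
  rw [show (hmul (hinv p) q).2.2
      = q.2.2 - p.2.2 + 2 * (p.1 * (q.2.1 - p.2.1) - p.2.1 * (q.1 - p.1)) by
    simp [hmul, hinv]; ring] at ht
  change _ ≤ dk p q ^ 2 at ht
  have h1 : |p.1 * (q.2.1 - p.2.1)| ≤ |p.1| * dk p q := by
    rw [abs_mul]; exact mul_le_mul_of_nonneg_left (abs_sub_snd_fst_le_dk p q) (abs_nonneg _)
  have h2 : |p.2.1 * (q.1 - p.1)| ≤ |p.2.1| * dk p q := by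
    rw [abs_mul]; exact mul_le_mul_of_nonneg_left (abs_sub_fst_le_dk p q) (abs_nonneg _)
  rw [abs_le] at *
  constructor <;> linarith [ht.1, ht.2, h1.1, h1.2, h2.1, h2.2]

lemma norm_sub_le_dk {p q : Heis} (hpq : dk p q ≤ 1) :
    ‖q - p‖ ≤ (1 + 4 * ‖p‖) * dk p q := by
  have hd := dk_nonneg p q
  have hp1 : |p.1| ≤ ‖p‖ := norm_fst_le p
  have hp2 : |p.2.1| ≤ ‖p‖ := (norm_fst_le p.2).trans (norm_snd_le p)
  have hp : 0 ≤ ‖p‖ := norm_nonneg p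
  generalize ‖p‖ = n at *
  simp only [Prod.norm_def, Real.norm_eq_abs, max_le_iff, Prod.fst_sub, Prod.snd_sub]
  refine ⟨?_, ?_, (abs_sub_snd_snd_le_dk p q).trans ?_⟩
  · nlinarith [abs_sub_fst_le_dk p q]
  · nlinarith [abs_sub_snd_fst_le_dk p q]
  · nlinarith

lemma groupLinear_horizontal (D : Heis →L[ℝ] ℝ) :
    GroupLinear (fun h => D (h.1, h.2.1, 0)) := by
  constructor
  · intro p q
    rw [← map_add]; simp [hmul]
  · intro r _ p
    rw [← smul_eq_mul, ← map_smul]; simp [hdil]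

lemma ContinuousLinearMap.apply_eq_horizontal_add (D : Heis →L[ℝ] ℝ) (h : Heis) :
    D h = D (h.1, h.2.1, 0) + h.2.2 * D (0, 0, 1) := by
  rw [← smul_eq_mul, ← map_smul, ← map_add]; simp

theorem DifferentiableAt.pansuDiffAt {f : Heis → ℝ} {x₀ : Heis}
    (hf : DifferentiableAt ℝ f x₀) : PansuDiffAt f x₀ := by
  set F : Heis → ℝ := fun h => f (hmul x₀ h)
  have hF : DifferentiableAt ℝ F 0 := by
    have : DifferentiableAt ℝ (hmul x₀) 0 := by unfold hmul; fun_prop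
    exact ((hmul_zero x₀).symm ▸ hf).comp 0 this
  set D := fderiv ℝ F 0
  have hrem : (fun h => F h - F 0 - D h) =o[𝓝 0] fun h => h := by
    simpa using hasFDerivAt_iff_isLittleO_nhds_zero.1 hF.hasFDerivAt
  have hknorm : Tendsto knorm (𝓝 0) (𝓝 0) := knorm_zero ▸ continuous_knorm.tendsto 0
  have hnorm : (fun h : Heis => h) =O[𝓝 0] knorm := by
    refine IsBigO.of_bound 1 ?_
    filter_upwards [hknorm.eventually (eventually_le_nhds zero_lt_one)] with h hh
    rw [one_mul, Real.norm_of_nonneg (knorm_nonneg h)]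
    exact norm_le_knorm hh
  have hvert : (fun h : Heis => h.2.2 * D (0, 0, 1)) =o[𝓝 0] knorm := by
    refine IsBigO.trans_isLittleO (g := fun h => knorm h ^ 2) ?_
      ((isLittleO_pow_id one_lt_two).comp_tendsto hknorm)
    refine IsBigO.of_bound ‖D (0, 0, 1)‖ (Eventually.of_forall fun h => ?_)
    rw [norm_mul, mul_comm, Real.norm_of_nonneg (by positivity : 0 ≤ knorm h ^ 2)]
    exact mul_le_mul_of_nonneg_left (abs_snd_snd_le_knorm_sq h) (norm_nonneg _)
  have hlo : (fun h => f (hmul x₀ h) - f x₀ - D (h.1, h.2.1, 0)) =o[𝓝 0] knorm :=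
    ((hrem.trans_isBigO hnorm).add hvert).congr_left fun h => by
      simp only [F, hmul_zero, D.apply_eq_horizontal_add h]; ring
  refine ⟨fun h => D (h.1, h.2.1, 0), groupLinear_horizontal D, ?_⟩
  simpa only [dk_zero_right] using (hlo.mono nhdsWithin_le_nhds).tendsto_div_nhds_zero

theorem LipschitzWith.exists_dk_lipschitz_of_hasCompactSupport {f : Heis → ℝ} {C : ℝ≥0}
    (hf : LipschitzWith C f) (hsupp : HasCompactSupport f) :
    ∃ K > 0, ∀ p q, |f p - f q| ≤ K * dk p q := by
  obtain ⟨M, hM⟩ := hsupp.exists_bound_of_continuous hf.continuous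
  obtain ⟨R, hR0, hR⟩ := hsupp.isCompact.isBounded.subset_closedBall_lt 0 0
  have hM0 : 0 ≤ M := (norm_nonneg _).trans (hM 0)
  refine ⟨C * (1 + 4 * R) + 2 * M + 1, by positivity, fun p q => ?_⟩
  wlog hp : f p ≠ 0 generalizing p q
  · by_cases hq : f q = 0
    · rw [not_not.1 hp, hq, sub_zero, abs_zero]
      exact mul_nonneg (by positivity) (dk_nonneg p q)
    · rw [abs_sub_comm, dk_comm]; exact this q p hq
  have hpR : ‖p‖ ≤ R := by simpa using hR (subset_tsupport f hp)
  have hd := dk_nonneg p q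
  rcases le_or_gt (dk p q) 1 with hd1 | hd1
  · calc |f p - f q| = dist (f q) (f p) := by rw [Real.dist_eq, abs_sub_comm]
      _ ≤ C * ‖q - p‖ := by rw [← dist_eq_norm]; exact hf.dist_le_mul q p
      _ ≤ C * ((1 + 4 * R) * dk p q) := by
          gcongr
          exact (norm_sub_le_dk hd1).trans (by gcongr)
      _ ≤ (C * (1 + 4 * R) + 2 * M + 1) * dk p q := by nlinarith
  · calc |f p - f q| ≤ ‖f p‖ + ‖f q‖ := abs_sub _ _
      _ ≤ 2 * M * 1 := by linarith [hM p, hM q]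
      _ ≤ (C * (1 + 4 * R) + 2 * M + 1) * dk p q := by
          nlinarith [mul_nonneg (C.coe_nonneg) (by linarith : (0:ℝ) ≤ 1 + 4 * R)]

/-- There exists a bump function on `H¹`: `1`-Lipschitz for `d_k`, everywhere Pansu
differentiable, nonnegative, compactly supported, and not identically zero. -/
theorem stmt_15 :
    ∃ b : Heis → ℝ,
      (∀ p q, |b p - b q| ≤ dk p q) ∧
      (∀ x, PansuDiffAt b x) ∧
      (∀ x, 0 ≤ b x) ∧
      HasCompactSupport b ∧
      (∃ x, b x ≠ 0) := by
  let β : ContDiffBump (0 : Heis) := ⟨1, 2, one_pos, one_lt_two⟩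
  have hβ : ContDiff ℝ 1 β := β.contDiff
  obtain ⟨C, hC⟩ := hβ.lipschitzWith_of_hasCompactSupport β.hasCompactSupport one_ne_zero
  obtain ⟨K, hK, hβK⟩ := hC.exists_dk_lipschitz_of_hasCompactSupport β.hasCompactSupport
  refine ⟨fun p => β p / K, fun p q => ?_, fun x => ?_, fun x => div_nonneg β.nonneg hK.le,
    β.hasCompactSupport.comp_left (g := (· / K)) (zero_div K), 0, ?_⟩
  · rw [← sub_div, abs_div, abs_of_pos hK, div_le_iff₀' hK]
    exact hβK p q
  · have := hβ.differentiable one_ne_zero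
    exact DifferentiableAt.pansuDiffAt (by fun_prop)
  · show β 0 / K ≠ 0
    rw [β.one_of_mem_closedBall (Metric.mem_closedBall_self zero_le_one)]
    positivity
end
end
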